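/- There exists a constant K > 0 such that for every s ≥ 3, | ∫_3^s sin( t / log t ) dt | ≤ K · log s. -/

import Mathlib

/-!
With `φ t = t / log t`, the function `g = 1 / φ' = log t + 1 + 1 / (log t - 1)` writes
`sin φ = (sin φ · φ') · g`, so integrating by parts gives `∫ sin φ = [-g cos φ] + ∫ g' cos φ`.
On `[3, ∞)` one has `|g t| ≤ 21 log t` and `|g' t| ≤ 400 / t`, so both terms are `O(log s)`.
-/

open Real Set intervalIntegral MeasureTheory

theorem integral_sin_comp_eq {φ φ' g g' : ℝ → ℝ} {a b : ℝ} (hab : a ≤ b)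
    (hφ : ∀ t ∈ Icc a b, HasDerivAt φ (φ' t) t) (hg : ∀ t ∈ Icc a b, HasDerivAt g (g' t) t)
    (hφg : ∀ t ∈ Icc a b, φ' t * g t = 1) (hg' : IntervalIntegrable g' volume a b) :
    ∫ t in a..b, sin (φ t) =
      g a * cos (φ a) - g b * cos (φ b) + ∫ t in a..b, cos (φ t) * g' t := by
  rw [← uIcc_of_le hab] at hφ hg hφg
  have hcos : ContinuousOn (fun t => cos (φ t)) (uIcc a b) :=
    continuous_cos.comp_continuousOn (HasDerivAt.continuousOn hφ)
  have hsin : IntervalIntegrable (fun t => sin (φ t)) volume a b :=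
    (continuous_sin.comp_continuousOn (HasDerivAt.continuousOn hφ)).intervalIntegrable
  have hcosg' : IntervalIntegrable (fun t => cos (φ t) * g' t) volume a b :=
    hg'.continuousOn_mul hcos
  have hderiv : ∀ t ∈ uIcc a b, HasDerivAt (fun t => -(cos (φ t) * g t))
      (sin (φ t) - cos (φ t) * g' t) t := by
    intro t ht
    refine (((hφ t ht).cos).mul (hg t ht)).neg.congr_deriv ?_
    linear_combination sin (φ t) * hφg t ht
  have hFTC := integral_eq_sub_of_hasDerivAt hderiv (hsin.sub hcosg')
  rw [integral_sub hsin hcosg'] at hFTC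
  linear_combination hFTC

theorem abs_integral_sin_comp_le {φ φ' g g' : ℝ → ℝ} {a b : ℝ} (hab : a ≤ b)
    (hφ : ∀ t ∈ Icc a b, HasDerivAt φ (φ' t) t) (hg : ∀ t ∈ Icc a b, HasDerivAt g (g' t) t)
    (hφg : ∀ t ∈ Icc a b, φ' t * g t = 1) (hg' : IntervalIntegrable g' volume a b) :
    |∫ t in a..b, sin (φ t)| ≤ |g a| + |g b| + ∫ t in a..b, |g' t| := by
  rw [integral_sin_comp_eq hab hφ hg hφg hg']
  have hcos_mul_le : ∀ x y : ℝ, |x * cos y| ≤ |x| := fun x y => by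
    rw [abs_mul]; exact mul_le_of_le_one_right (abs_nonneg x) (abs_cos_le_one y)
  have hint : |∫ t in a..b, cos (φ t) * g' t| ≤ ∫ t in a..b, |g' t| := by
    rw [← norm_eq_abs]
    refine norm_integral_le_of_norm_le hab (ae_of_all _ fun t _ => ?_) hg'.abs
    rw [norm_eq_abs, mul_comm]; exact hcos_mul_le _ _
  calc _ ≤ |g a * cos (φ a)| + |g b * cos (φ b)| + |∫ t in a..b, cos (φ t) * g' t| :=
        (abs_add_le _ _).trans (by gcongr; exact abs_sub _ _)
    _ ≤ _ := add_le_add (add_le_add (hcos_mul_le _ _) (hcos_mul_le _ _)) hint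

noncomputable def recipPhaseDeriv (t : ℝ) : ℝ := log t + 1 + (log t - 1)⁻¹

noncomputable def recipPhaseDeriv' (t : ℝ) : ℝ := t⁻¹ * (1 - ((log t - 1) ^ 2)⁻¹)

theorem hasDerivAt_div_log {t : ℝ} (hlog : log t ≠ 0) :
    HasDerivAt (fun t => t / log t) ((log t - 1) / log t ^ 2) t := by
  have ht : t ≠ 0 := by rintro rfl; exact hlog log_zero
  refine ((hasDerivAt_id' t).div (hasDerivAt_log ht) hlog).congr_deriv ?_
  field_simp

theorem hasDerivAt_recipPhaseDeriv {t : ℝ} (ht : t ≠ 0) (hlog : log t ≠ 1) :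
    HasDerivAt recipPhaseDeriv (recipPhaseDeriv' t) t := by
  have hlog' : log t - 1 ≠ 0 := sub_ne_zero.2 hlog
  have hL := hasDerivAt_log ht
  refine (((hL.add_const 1).add ((hL.sub_const 1).inv hlog'))).congr_deriv ?_
  rw [recipPhaseDeriv']
  field_simp
  ring

theorem div_log_deriv_mul_recipPhaseDeriv {t : ℝ} (hlog₀ : log t ≠ 0) (hlog₁ : log t ≠ 1) :
    (log t - 1) / log t ^ 2 * recipPhaseDeriv t = 1 := by
  have hlog' : log t - 1 ≠ 0 := sub_ne_zero.2 hlog₁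
  rw [recipPhaseDeriv]
  field_simp
  ring

theorem log_ge_of_three_le {t : ℝ} (ht : 3 ≤ t) : 21 / 20 ≤ log t :=
  (log_three_gt_d9.trans_le (log_le_log (by norm_num) ht)).le.trans' (by norm_num)

theorem abs_recipPhaseDeriv_le {t : ℝ} (ht : 3 ≤ t) : |recipPhaseDeriv t| ≤ 21 * log t := by
  have hL := log_ge_of_three_le ht
  have hinv : (log t - 1)⁻¹ ≤ 20 := inv_le_of_inv_le₀ (by norm_num) (by linarith)
  have hinv_pos : 0 < (log t - 1)⁻¹ := inv_pos.2 (by linarith)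
  rw [recipPhaseDeriv, abs_of_pos (by linarith)]
  linarith

theorem abs_recipPhaseDeriv'_le {t : ℝ} (ht : 3 ≤ t) : |recipPhaseDeriv' t| ≤ 400 * t⁻¹ := by
  have hL := log_ge_of_three_le ht
  have hinv : ((log t - 1) ^ 2)⁻¹ ≤ 400 :=
    inv_le_of_inv_le₀ (by norm_num) (by nlinarith)
  rw [recipPhaseDeriv', abs_mul, abs_of_pos (by positivity : 0 < t⁻¹), mul_comm]
  gcongr
  rw [abs_le]
  constructor <;> nlinarith [inv_nonneg.2 (sq_nonneg (log t - 1))]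

theorem continuousOn_recipPhaseDeriv' : ContinuousOn recipPhaseDeriv' (Ici 3) := by
  intro t ht
  have hL := log_ge_of_three_le ht
  have ht0 : t ≠ 0 := by rintro rfl; norm_num at ht
  unfold recipPhaseDeriv'
  fun_prop (disch := first | exact ht0 | nlinarith)

theorem integral_abs_recipPhaseDeriv'_le {s : ℝ} (hs : 3 ≤ s) :
    ∫ t in (3 : ℝ)..s, |recipPhaseDeriv' t| ≤ 400 * log s := by
  calc ∫ t in (3 : ℝ)..s, |recipPhaseDeriv' t|
      ≤ ∫ t in (3 : ℝ)..s, 400 * t⁻¹ := by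
        refine integral_mono_on hs ?_ ?_ fun t ht => abs_recipPhaseDeriv'_le ht.1
        · exact (continuousOn_recipPhaseDeriv'.mono Icc_subset_Ici_self).abs
            |>.intervalIntegrable_of_Icc hs
        · refine (intervalIntegrable_inv_iff.2 (Or.inr ?_)).const_mul _
          rw [uIcc_of_le hs]
          exact fun h => absurd h.1 (by norm_num)
    _ = 400 * log (s / 3) := by
        rw [intervalIntegral.integral_const_mul, integral_inv_of_pos (by norm_num) (by linarith)]
    _ ≤ 400 * log s := by gcongr; exact div_le_self (by linarith) (by norm_num)

theorem stmt_18 :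
    ∃ K : ℝ, 0 < K ∧ ∀ s : ℝ, 3 ≤ s →
      |∫ t in (3 : ℝ)..s, Real.sin (t / Real.log t)| ≤ K * Real.log s := by
  refine ⟨442, by norm_num, fun s hs => ?_⟩
  have hlog₁ : ∀ t ∈ Icc 3 s, 1 < log t := fun t ht =>
    (log_ge_of_three_le ht.1).trans_lt' (by norm_num)
  have hlog₀ : ∀ t ∈ Icc 3 s, 0 < log t := fun t ht => zero_lt_one.trans (hlog₁ t ht)
  have hpos : ∀ t ∈ Icc 3 s, 0 < t := fun t ht => by linarith [ht.1]
  have hbound := abs_integral_sin_comp_le hs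
    (fun t ht => hasDerivAt_div_log (hlog₀ t ht).ne')
    (fun t ht => hasDerivAt_recipPhaseDeriv (hpos t ht).ne' (hlog₁ t ht).ne')
    (fun t ht => div_log_deriv_mul_recipPhaseDeriv (hlog₀ t ht).ne' (hlog₁ t ht).ne')
    ((continuousOn_recipPhaseDeriv'.mono Icc_subset_Ici_self).intervalIntegrable_of_Icc hs)
  have hlog_mono : log 3 ≤ log s := log_le_log (by norm_num) hs
  linarith [abs_recipPhaseDeriv_le le_rfl, abs_recipPhaseDeriv_le hs,
    integral_abs_recipPhaseDeriv'_le hs, log_ge_of_three_le le_rfl]
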